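/- arXiv:1609.03278 — 4 statements merged into one kernel-verified Lean document; each statement's English description precedes it below -/
import Mathlib

section
/- Let U be a nonzero n×n paraunitary matrix of Laurent polynomials over ℂ, and let Δ be a real number with 0 < Δ < 1. Then the complex matrix U[Δ] is invertible and ‖U[Δ]‖ · ‖U[Δ]⁻¹‖ ≤ Δ^{val(U) − deg(U)}, where ‖·‖ is the operator (spectral) norm. -/
open scoped ComplexConjugate
open LaurentPolynomial Finset

noncomputable section

/-- Evaluation of a Laurent polynomial at a complex number. -/
def Leval (ω : ℂ) (p : LaurentPolynomial ℂ) : ℂ :=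
  ∑ k ∈ p.coeff.support, p.coeff k * ω ^ k

/-- Para-conjugate of a Laurent polynomial: conjugate the coefficients and substitute `z⁻¹`. -/
def paraConj (p : LaurentPolynomial ℂ) : LaurentPolynomial ℂ :=
  AddMonoidAlgebra.ofCoeff
    (Finsupp.equivMapDomain (Equiv.neg ℤ) (Finsupp.mapRange (starRingEnd ℂ) (map_zero _) p.coeff))

/-- `U*`: the transpose of `U` with every entry para-conjugated. -/
def paraConjTranspose {n : ℕ} (U : Matrix (Fin n) (Fin n) (LaurentPolynomial ℂ)) :
    Matrix (Fin n) (Fin n) (LaurentPolynomial ℂ) :=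
  U.transpose.map paraConj

/-- A Laurent-polynomial matrix is paraunitary if `U* * U = 1`. -/
def IsParaunitary {n : ℕ} (U : Matrix (Fin n) (Fin n) (LaurentPolynomial ℂ)) : Prop :=
  paraConjTranspose U * U = 1

/-- Entrywise evaluation of a matrix of Laurent polynomials at a complex number. -/
def MatEval {n : ℕ} (ω : ℂ) (M : Matrix (Fin n) (Fin n) (LaurentPolynomial ℂ)) :
    Matrix (Fin n) (Fin n) ℂ :=
  M.map (Leval ω)

/-- A plane-rotation gate: identity except on the 2×2 principal submatrix in rows/columns
`a ≠ b`, where it is a real orthogonal 2×2 matrix (embedded as constant Laurent polynomials). -/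
def IsRotationGate {n : ℕ} (G : Matrix (Fin n) (Fin n) (LaurentPolynomial ℂ)) : Prop :=
  ∃ (a b : Fin n) (R : Matrix (Fin 2) (Fin 2) ℝ), a ≠ b ∧ R.transpose * R = 1 ∧
    G a a = LaurentPolynomial.C (R 0 0 : ℂ) ∧
    G a b = LaurentPolynomial.C (R 0 1 : ℂ) ∧
    G b a = LaurentPolynomial.C (R 1 0 : ℂ) ∧
    G b b = LaurentPolynomial.C (R 1 1 : ℂ) ∧
    (∀ i : Fin n, i ≠ a → i ≠ b → G i i = 1) ∧
    (∀ i j : Fin n, i ≠ j → ¬(i = a ∧ j = b) → ¬(i = b ∧ j = a) → G i j = 0)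

/-- A monomial gate: diagonal, equal to `1` on every diagonal entry except one, which is `z^k`. -/
def IsMonomialGate {n : ℕ} (G : Matrix (Fin n) (Fin n) (LaurentPolynomial ℂ)) : Prop :=
  ∃ (a : Fin n) (k : ℤ),
    G a a = LaurentPolynomial.T k ∧
    (∀ i : Fin n, i ≠ a → G i i = 1) ∧
    (∀ i j : Fin n, i ≠ j → G i j = 0)

/-- A Laurent lift of length `m`: `M 0 = 1` and each step is left multiplication by a
plane-rotation or monomial gate. -/
def IsLaurentLift {n : ℕ} (m : ℕ) (M : ℕ → Matrix (Fin n) (Fin n) (LaurentPolynomial ℂ)) : Prop :=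
  M 0 = 1 ∧ ∀ t < m, ∃ G : Matrix (Fin n) (Fin n) (LaurentPolynomial ℂ),
    (IsRotationGate G ∨ IsMonomialGate G) ∧ M (t + 1) = G * M t

/-- The union of the supports of all the entries of a Laurent-polynomial matrix. -/
def matSupport {n : ℕ} (M : Matrix (Fin n) (Fin n) (LaurentPolynomial ℂ)) : Finset ℤ :=
  (Finset.univ : Finset (Fin n × Fin n)).biUnion fun ij => (M ij.1 ij.2).coeff.support

/-- `deg(M)`: the maximal exponent with a nonzero coefficient over all nonzero entries
(junk value `0` for the zero matrix). -/
def matDeg {n : ℕ} (M : Matrix (Fin n) (Fin n) (LaurentPolynomial ℂ)) : ℤ :=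
  WithBot.unbotD 0 (matSupport M).max

/-- `val(M)`: the minimal exponent with a nonzero coefficient over all nonzero entries
(junk value `0` for the zero matrix). -/
def matVal {n : ℕ} (M : Matrix (Fin n) (Fin n) (LaurentPolynomial ℂ)) : ℤ :=
  WithTop.untopD 0 (matSupport M).min

/-- A Laurent lift is `Δ`-algebraically `κ`-well conditioned if
`Δ ^ (val(M_t) - deg(M_t)) ≤ κ` for all `t`. -/
def IsAlgWellConditioned {n : ℕ} (m : ℕ) (M : ℕ → Matrix (Fin n) (Fin n) (LaurentPolynomial ℂ))
    (Δ κ : ℝ) : Prop :=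
  ∀ t ≤ m, Δ ^ (matVal (M t) - matDeg (M t)) ≤ κ

/-- The L2 operator (spectral) norm of a complex matrix. -/
def specNorm {n : ℕ} (A : Matrix (Fin n) (Fin n) ℂ) : ℝ :=
  ‖Matrix.toEuclideanCLM (𝕜 := ℂ) A‖

/-- The Walsh–Hadamard matrix of order `n = 2^s`:
`H_n(i,j) = n^{-1/2} · (-1)^{⟨[i],[j]⟩}` with `⟨·,·⟩` the mod-2 inner product of bit vectors. -/
def WalshHadamard (s : ℕ) : Matrix (Fin (2 ^ s)) (Fin (2 ^ s)) ℝ :=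
  fun i j => (Real.sqrt (2 ^ s))⁻¹ *
    (-1 : ℝ) ^ (∑ r ∈ Finset.range s, (Nat.testBit i.val r).toNat * (Nat.testBit j.val r).toNat)

/-- The quasi-entropy kernel `h(u) = -u·log₂|u|` (note `h 0 = 0`, since `Real.logb 2 0 = 0`). -/
def hQE (u : ℂ) : ℂ := -u * (Real.logb 2 ‖u‖ : ℂ)

/-- The preconditioned quasi-entropy
`Φ_{A,B}(M) = Σ_k Σ_{i,j} h(coeff((M·A)_{i,j},k) · conj(coeff((M·B)_{i,j},k)))`.
The sum over `k` is restricted to a finite set supporting all nonzero terms. -/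
def Phi {n : ℕ} (A B M : Matrix (Fin n) (Fin n) (LaurentPolynomial ℂ)) : ℂ :=
  ∑ i : Fin n, ∑ j : Fin n,
    ∑ k ∈ ((M * A) i j).coeff.support ∪ ((M * B) i j).coeff.support,
      hQE (((M * A) i j).coeff k * conj (((M * B) i j).coeff k))

/-- The norm of a Laurent polynomial: `sqrt (Σ_k |coeff(p,k)|²)`. -/
def pnorm (p : LaurentPolynomial ℂ) : ℝ :=
  Real.sqrt (∑ k ∈ p.coeff.support, ‖p.coeff k‖ ^ 2)

/-- The norm of the `i`-th row of a Laurent-polynomial matrix. -/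
def rowNorm {n : ℕ} (M : Matrix (Fin n) (Fin n) (LaurentPolynomial ℂ)) (i : Fin n) : ℝ :=
  Real.sqrt (∑ j : Fin n, pnorm (M i j) ^ 2)

/-- The `(2,∞)` norm of a Laurent-polynomial matrix: the maximum row norm. -/
def norm2inf {n : ℕ} (M : Matrix (Fin n) (Fin n) (LaurentPolynomial ℂ)) : ℝ :=
  ⨆ i : Fin n, rowNorm M i

end

/-! For `|ω| = 1`, paraunitarity says that `U[ω]` is unitary, so `‖U[ω]‖ ≤ 1` on the unit
circle; for real `Δ` it gives `U[Δ]⁻¹ = U[Δ⁻¹]ᴴ`. The matrix functions `z ^ (-val U) • U[z]` and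
`z ^ (deg U) • U[z⁻¹]` are polynomial in `z`, so by the maximum modulus principle they are bounded
by `1` on the closed unit disc. At `z = Δ` this gives `‖U[Δ]‖ ≤ Δ ^ val U` and
`‖U[Δ]⁻¹‖ = ‖U[Δ⁻¹]‖ ≤ Δ ^ (-deg U)`. -/

open scoped Matrix Matrix.Norms.L2Operator

noncomputable def levalAlgHom (ω : ℂˣ) : LaurentPolynomial ℂ →ₐ[ℂ] ℂ :=
  AddMonoidAlgebra.lift ℂ ℂ ℤ ((Units.coeHom ℂ).comp (zpowersHom ℂˣ ω))

theorem leval_eq_levalAlgHom (ω : ℂˣ) (p : LaurentPolynomial ℂ) :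
    Leval ω p = levalAlgHom ω p := by
  rw [levalAlgHom, AddMonoidAlgebra.lift_apply, Leval, Finsupp.sum]
  refine Finset.sum_congr rfl fun k _ => ?_
  simp [Units.val_zpow_eq_zpow_val]

theorem matEval_eq_mapMatrix {n : ℕ} (ω : ℂˣ)
    (M : Matrix (Fin n) (Fin n) (LaurentPolynomial ℂ)) :
    MatEval ω M = (levalAlgHom ω : LaurentPolynomial ℂ →+* ℂ).mapMatrix M := by
  ext i j
  exact leval_eq_levalAlgHom ω (M i j)

theorem leval_paraConj (ω : ℂ) (p : LaurentPolynomial ℂ) :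
    Leval ω (paraConj p) = conj (Leval (conj ω)⁻¹ p) := by
  have hsum : ∀ (μ : ℂ) (q : LaurentPolynomial ℂ),
      Leval μ q = q.coeff.sum fun k a => a * μ ^ k := fun _ _ => rfl
  rw [hsum, hsum, paraConj, AddMonoidAlgebra.coeff_ofCoeff, Finsupp.equivMapDomain_eq_mapDomain,
    Finsupp.sum_mapDomain_index (by simp) (by intros; ring),
    Finsupp.sum_mapRange_index (by simp), map_finsuppSum]
  refine Finsupp.sum_congr fun k _ => ?_
  simp [zpow_neg]

theorem matEval_paraConjTranspose {n : ℕ} (ω : ℂ)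
    (U : Matrix (Fin n) (Fin n) (LaurentPolynomial ℂ)) :
    MatEval ω (paraConjTranspose U) = (MatEval (conj ω)⁻¹ U)ᴴ := by
  ext i j
  exact leval_paraConj ω (U j i)

def coeffMatrix {n : ℕ} (M : Matrix (Fin n) (Fin n) (LaurentPolynomial ℂ)) (k : ℤ) :
    Matrix (Fin n) (Fin n) ℂ :=
  Matrix.of fun i j => (M i j).coeff k

theorem subset_matSupport {n : ℕ} (M : Matrix (Fin n) (Fin n) (LaurentPolynomial ℂ))
    (i j : Fin n) :
    (M i j).coeff.support ⊆ matSupport M :=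
  fun _ hk => mem_biUnion.2 ⟨(i, j), mem_univ _, hk⟩

theorem matEval_eq_sum_zpow_smul_coeffMatrix {n : ℕ} (ω : ℂ)
    (M : Matrix (Fin n) (Fin n) (LaurentPolynomial ℂ)) :
    MatEval ω M = ∑ k ∈ matSupport M, ω ^ k • coeffMatrix M k := by
  ext i j
  simp only [Matrix.sum_apply, Matrix.smul_apply, coeffMatrix, Matrix.of_apply, smul_eq_mul]
  refine (sum_subset (subset_matSupport M i j) fun k _ hk => ?_).trans
    (sum_congr rfl fun k _ => mul_comm _ _)
  rw [Finsupp.notMem_support_iff.1 hk, zero_mul]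

theorem matVal_le_of_mem_matSupport {n : ℕ} {M : Matrix (Fin n) (Fin n) (LaurentPolynomial ℂ)}
    {k : ℤ} (hk : k ∈ matSupport M) : matVal M ≤ k := by
  have hne : (matSupport M).Nonempty := ⟨k, hk⟩
  rw [matVal, ← coe_min' hne]
  exact min'_le _ _ hk

theorem le_matDeg_of_mem_matSupport {n : ℕ} {M : Matrix (Fin n) (Fin n) (LaurentPolynomial ℂ)}
    {k : ℤ} (hk : k ∈ matSupport M) : k ≤ matDeg M := by
  have hne : (matSupport M).Nonempty := ⟨k, hk⟩
  rw [matDeg, ← coe_max' hne]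
  exact le_max' _ _ hk

theorem norm_sum_zpow_smul_le_of_forall_norm_eq_one {ι E : Type*} [NormedAddCommGroup E]
    [NormedSpace ℂ E] (s : Finset ι) (e : ι → ℤ) (A : ι → E) {v : ℤ} (hv : ∀ k ∈ s, v ≤ e k)
    {C : ℝ} (hC : ∀ ω : ℂ, ‖ω‖ = 1 → ‖∑ k ∈ s, ω ^ e k • A k‖ ≤ C)
    {z : ℂ} (hz0 : z ≠ 0) (hz1 : ‖z‖ ≤ 1) :
    ‖∑ k ∈ s, z ^ e k • A k‖ ≤ C * ‖z‖ ^ v := by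
  set f : ℂ → E := fun w => ∑ k ∈ s, w ^ (e k - v).toNat • A k
  have hf : ∀ w : ℂ, w ≠ 0 → ∑ k ∈ s, w ^ e k • A k = w ^ v • f w := fun w hw => by
    rw [smul_sum]
    refine sum_congr rfl fun k hk => ?_
    rw [smul_smul, ← zpow_natCast, Int.toNat_of_nonneg (sub_nonneg.2 (hv k hk)), ← zpow_add₀ hw,
      add_sub_cancel]
  have hf_diff : Differentiable ℂ f :=
    Differentiable.fun_sum fun k _ => (differentiable_pow _).smul_const _
  have hf_circle : ∀ w ∈ frontier (Metric.ball (0 : ℂ) 1), ‖f w‖ ≤ C := fun w hw => by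
    have hw1 : ‖w‖ = 1 := by
      rwa [frontier_ball 0 one_ne_zero, mem_sphere_zero_iff_norm] at hw
    have hw0 : w ≠ 0 := norm_ne_zero_iff.1 (by rw [hw1]; exact one_ne_zero)
    simpa [hf w hw0, norm_smul, hw1] using hC w hw1
  have hz : z ∈ closure (Metric.ball (0 : ℂ) 1) := by
    rwa [closure_ball 0 one_ne_zero, mem_closedBall_zero_iff]
  rw [hf z hz0, norm_smul, norm_zpow, mul_comm]
  exact mul_le_mul_of_nonneg_right
    (Complex.norm_le_of_forall_mem_frontier_norm_le Metric.isBounded_ball hf_diff.diffContOnCl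
      hf_circle hz) (zpow_nonneg (norm_nonneg z) v)

namespace IsParaunitary

variable {n : ℕ} {U : Matrix (Fin n) (Fin n) (LaurentPolynomial ℂ)}

theorem conjTranspose_matEval_mul_matEval (hU : IsParaunitary U) {ω : ℂ} (hω : ω ≠ 0) :
    (MatEval (conj ω)⁻¹ U)ᴴ * MatEval ω U = 1 := by
  have h := congrArg (MatEval (Units.mk0 ω hω)) hU
  rwa [matEval_eq_mapMatrix, matEval_eq_mapMatrix, map_mul, map_one, ← matEval_eq_mapMatrix,
    ← matEval_eq_mapMatrix, Units.val_mk0, matEval_paraConjTranspose] at h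

theorem matEval_mem_unitary (hU : IsParaunitary U) {ω : ℂ} (hω : ‖ω‖ = 1) :
    MatEval ω U ∈ unitary (Matrix (Fin n) (Fin n) ℂ) := by
  have hω0 : ω ≠ 0 := norm_ne_zero_iff.1 (by rw [hω]; exact one_ne_zero)
  have h := hU.conjTranspose_matEval_mul_matEval hω0
  rw [← Complex.inv_eq_conj hω, inv_inv] at h
  exact Matrix.mem_unitaryGroup_iff'.2 h

theorem norm_matEval_le_one (hU : IsParaunitary U) {ω : ℂ} (hω : ‖ω‖ = 1) :
    ‖MatEval ω U‖ ≤ 1 := by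
  calc ‖MatEval ω U‖ = ‖MatEval ω U * 1‖ := by rw [mul_one]
    _ = ‖(1 : Matrix (Fin n) (Fin n) ℂ)‖ :=
        CStarRing.norm_mem_unitary_mul _ (hU.matEval_mem_unitary hω)
    _ ≤ 1 := by
      rw [Matrix.cstar_norm_def, map_one]
      exact ContinuousLinearMap.norm_id_le

theorem norm_matEval_le (hU : IsParaunitary U) {z : ℂ} (hz0 : z ≠ 0) (hz1 : ‖z‖ ≤ 1) :
    ‖MatEval z U‖ ≤ ‖z‖ ^ matVal U := by
  have hcircle (ω : ℂ) (hω : ‖ω‖ = 1) :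
      ‖∑ k ∈ matSupport U, ω ^ k • coeffMatrix U k‖ ≤ 1 := by
    rw [← matEval_eq_sum_zpow_smul_coeffMatrix]
    exact hU.norm_matEval_le_one hω
  rw [matEval_eq_sum_zpow_smul_coeffMatrix, ← one_mul (_ ^ _)]
  exact norm_sum_zpow_smul_le_of_forall_norm_eq_one _ (fun k => k) _
    (fun _ hk => matVal_le_of_mem_matSupport hk) hcircle hz0 hz1

theorem norm_matEval_inv_le (hU : IsParaunitary U) {z : ℂ} (hz0 : z ≠ 0) (hz1 : ‖z‖ ≤ 1) :
    ‖MatEval z⁻¹ U‖ ≤ ‖z‖ ^ (-matDeg U) := by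
  have hcircle (ω : ℂ) (hω : ‖ω‖ = 1) :
      ‖∑ k ∈ matSupport U, ω ^ (-k) • coeffMatrix U k‖ ≤ 1 := by
    simp_rw [← inv_zpow', ← matEval_eq_sum_zpow_smul_coeffMatrix]
    exact hU.norm_matEval_le_one (by rw [norm_inv, hω, inv_one])
  simp_rw [matEval_eq_sum_zpow_smul_coeffMatrix, inv_zpow']
  rw [← one_mul (_ ^ _)]
  exact norm_sum_zpow_smul_le_of_forall_norm_eq_one _ (fun k => -k) _
    (fun _ hk => neg_le_neg (le_matDeg_of_mem_matSupport hk)) hcircle hz0 hz1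

end IsParaunitary

theorem paraunitary_eval_condition_bound_general {n : ℕ}
    (U : Matrix (Fin n) (Fin n) (LaurentPolynomial ℂ)) (hU : IsParaunitary U)
    (Δ : ℝ) (h0 : 0 < Δ) (h1 : Δ < 1) :
    IsUnit (MatEval (Δ : ℂ) U) ∧
      specNorm (MatEval (Δ : ℂ) U) * specNorm (MatEval (Δ : ℂ) U)⁻¹
        ≤ Δ ^ (matVal U - matDeg U) := by
  have hΔ0 : (Δ : ℂ) ≠ 0 := Complex.ofReal_ne_zero.2 h0.ne'
  have hΔnorm : ‖(Δ : ℂ)‖ = Δ := by rw [Complex.norm_real, Real.norm_of_nonneg h0.le]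
  have hΔ1 : ‖(Δ : ℂ)‖ ≤ 1 := hΔnorm.trans_le h1.le
  have hleft : (MatEval (Δ : ℂ)⁻¹ U)ᴴ * MatEval Δ U = 1 := by
    simpa using hU.conjTranspose_matEval_mul_matEval hΔ0
  have hval := hΔnorm ▸ hU.norm_matEval_le hΔ0 hΔ1
  have hdeg := hΔnorm ▸ hU.norm_matEval_inv_le hΔ0 hΔ1
  rw [Matrix.inv_eq_left_inv hleft]
  refine ⟨(Matrix.isUnit_iff_isUnit_det _).2 (Matrix.isUnit_det_of_left_inverse hleft), ?_⟩
  calc specNorm (MatEval (Δ : ℂ) U) * specNorm (MatEval (Δ : ℂ)⁻¹ U)ᴴ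
      = ‖MatEval (Δ : ℂ) U‖ * ‖MatEval (Δ : ℂ)⁻¹ U‖ := by
        rw [specNorm, specNorm, ← Matrix.cstar_norm_def, ← Matrix.cstar_norm_def,
          Matrix.l2_opNorm_conjTranspose]
    _ ≤ Δ ^ matVal U * Δ ^ (-matDeg U) :=
        mul_le_mul hval hdeg (norm_nonneg _) (zpow_nonneg h0.le _)
    _ = Δ ^ (matVal U - matDeg U) := by rw [← zpow_add₀ h0.ne', sub_eq_add_neg]

/-- condition number of an evaluated paraunitary matrix. -/
theorem paraunitary_eval_condition_bound {n : ℕ}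
    (U : Matrix (Fin n) (Fin n) (LaurentPolynomial ℂ)) (hU : IsParaunitary U) (hU0 : U ≠ 0)
    (Δ : ℝ) (h0 : 0 < Δ) (h1 : Δ < 1) :
    IsUnit (MatEval (Δ : ℂ) U) ∧
      specNorm (MatEval (Δ : ℂ) U) * specNorm (MatEval (Δ : ℂ) U)⁻¹
        ≤ Δ ^ (matVal U - matDeg U) :=
  paraunitary_eval_condition_bound_general U hU Δ h0 h1
end

section
/- Let U be a nonzero n×n paraunitary matrix of Laurent polynomials over ℂ, and let Δ be a real number with 0 < Δ < 1. Then U[Δ] is invertible, its inverse equals U*[Δ], and ‖U[Δ]⁻¹‖ ≤ Δ^{−deg(U)}, where ‖·‖ is the operator (spectral) norm. -/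
open scoped ComplexConjugate
open LaurentPolynomial Finset

/-!
On the unit circle `U*[z] = U[z]ᴴ`, so paraunitarity makes `U[z]` unitary and `‖U*[z]‖ ≤ 1`
there. Every exponent occurring in `U*` is at least `-deg U`, so `z ^ deg U • U*[z]` extends to an
entire matrix-valued function, and the maximum modulus principle on the unit disc gives
`Δ ^ deg U * ‖U*[Δ]‖ ≤ 1`. Evaluation at a nonzero point is a ring homomorphism, so `U* U = 1`
gives `U*[Δ] U[Δ] = 1`.
-/

open scoped Matrix
-- With this norm on matrices, `specNorm A` is `‖A‖` by definition.
open scoped Matrix.Norms.L2Operator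

lemma Leval_eq_sum (z : ℂ) (p : LaurentPolynomial ℂ) :
    Leval z p = p.coeff.sum fun k c => c * z ^ k := rfl

lemma Leval_eq_eval₂ (u : ℂˣ) (p : LaurentPolynomial ℂ) :
    Leval u p = eval₂ (RingHom.id ℂ) u p := by
  induction p using LaurentPolynomial.induction_on' with
  | add p q hp hq =>
    rw [map_add, ← hp, ← hq]
    simp only [Leval_eq_sum]
    rw [AddMonoidAlgebra.coeff_add, Finsupp.sum_add_index' (by simp) (fun _ _ _ => add_mul _ _ _)]
  | C_mul_T k c =>
    rw [eval₂_C_mul_T, ← single_eq_C_mul_T, Leval_eq_sum, AddMonoidAlgebra.coeff_single,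
      Finsupp.sum_single_index (zero_mul _)]
    simp

lemma MatEval_eq_mapMatrix {n : ℕ} (u : ℂˣ) (M : Matrix (Fin n) (Fin n) (LaurentPolynomial ℂ)) :
    MatEval u M = (eval₂ (RingHom.id ℂ) u).mapMatrix M := by
  ext i j
  exact Leval_eq_eval₂ u (M i j)

lemma IsParaunitary.MatEval_mul_eq_one {n : ℕ} {U : Matrix (Fin n) (Fin n) (LaurentPolynomial ℂ)}
    (hU : IsParaunitary U) {z : ℂ} (hz : z ≠ 0) :
    MatEval z (paraConjTranspose U) * MatEval z U = 1 := by
  have h := congr_arg (eval₂ (RingHom.id ℂ) (Units.mk0 z hz)).mapMatrix hU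
  rwa [map_mul, map_one, ← MatEval_eq_mapMatrix, ← MatEval_eq_mapMatrix, Units.val_mk0] at h

lemma coeff_paraConj (p : LaurentPolynomial ℂ) (k : ℤ) :
    (paraConj p).coeff k = conj (p.coeff (-k)) := by
  simp [paraConj]

lemma Leval_paraConj (z : ℂ) (p : LaurentPolynomial ℂ) :
    Leval z (paraConj p) = conj (Leval (conj z)⁻¹ p) := by
  rw [Leval_eq_sum, paraConj, AddMonoidAlgebra.coeff_ofCoeff, Finsupp.sum_equivMapDomain,
    Finsupp.sum_mapRange_index (by simp), Leval, map_sum]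
  refine Finset.sum_congr rfl fun k _ => ?_
  simp [zpow_neg]

lemma MatEval_paraConjTranspose {n : ℕ} (z : ℂ) (U : Matrix (Fin n) (Fin n) (LaurentPolynomial ℂ)) :
    MatEval z (paraConjTranspose U) = (MatEval (conj z)⁻¹ U)ᴴ := by
  ext i j
  exact Leval_paraConj z (U j i)

lemma Matrix.l2_opNorm_le_one_of_conjTranspose_mul_self_eq_one {m 𝕜 : Type*} [Fintype m]
    [DecidableEq m] [RCLike 𝕜] {A : Matrix m m 𝕜} (h : Aᴴ * A = 1) : ‖A‖ ≤ 1 := by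
  have h1 : ‖(1 : Matrix m m 𝕜)‖ ≤ 1 := by
    rw [Matrix.cstar_norm_def, map_one]
    exact ContinuousLinearMap.norm_id_le
  have := Matrix.l2_opNorm_conjTranspose_mul_self A
  rw [h] at this
  nlinarith [norm_nonneg A]

lemma IsParaunitary.norm_MatEval_paraConjTranspose_le_one {n : ℕ}
    {U : Matrix (Fin n) (Fin n) (LaurentPolynomial ℂ)} (hU : IsParaunitary U) {z : ℂ}
    (hz : ‖z‖ = 1) : ‖MatEval z (paraConjTranspose U)‖ ≤ 1 := by
  have hz0 : z ≠ 0 := norm_ne_zero_iff.mp (by rw [hz]; exact one_ne_zero)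
  have hstar : MatEval z (paraConjTranspose U) = (MatEval z U)ᴴ := by
    rw [MatEval_paraConjTranspose, RCLike.inv_eq_conj (by rwa [RCLike.norm_conj]),
      RCLike.conj_conj]
  have hunit := hU.MatEval_mul_eq_one hz0
  rw [hstar] at hunit ⊢
  rw [Matrix.l2_opNorm_conjTranspose]
  exact Matrix.l2_opNorm_le_one_of_conjTranspose_mul_self_eq_one hunit

lemma exists_differentiable_eq_zpow_mul_Leval (p : LaurentPolynomial ℂ) (d : ℤ)
    (hp : ∀ k ∈ p.coeff.support, -d ≤ k) :
    ∃ f : ℂ → ℂ, Differentiable ℂ f ∧ ∀ z ≠ 0, f z = z ^ d * Leval z p := by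
  refine ⟨fun z => ∑ k ∈ p.coeff.support, p.coeff k * z ^ (k + d).toNat, by fun_prop,
    fun z hz => ?_⟩
  rw [Leval, Finset.mul_sum]
  refine Finset.sum_congr rfl fun k hk => ?_
  rw [← zpow_natCast, Int.toNat_of_nonneg (by linarith [hp k hk]), zpow_add₀ hz]
  ring

lemma exists_differentiable_eq_zpow_smul_MatEval {n : ℕ}
    (M : Matrix (Fin n) (Fin n) (LaurentPolynomial ℂ)) (d : ℤ)
    (hM : ∀ i j, ∀ k ∈ (M i j).coeff.support, -d ≤ k) :
    ∃ F : ℂ → Matrix (Fin n) (Fin n) ℂ, Differentiable ℂ F ∧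
      ∀ z ≠ 0, F z = z ^ d • MatEval z M := by
  choose f hf hfM using fun i j => exists_differentiable_eq_zpow_mul_Leval (M i j) d (hM i j)
  refine ⟨fun z => ∑ i, ∑ j, f i j z • Matrix.single i j 1, by fun_prop, fun z hz => ?_⟩
  conv_rhs => rw [Matrix.matrix_eq_sum_single (MatEval z M)]
  simp only [Finset.smul_sum, Matrix.smul_single, hfM _ _ z hz, smul_eq_mul, mul_one]
  rfl

lemma norm_MatEval_le_of_norm_le_one_on_circle {n : ℕ}
    (M : Matrix (Fin n) (Fin n) (LaurentPolynomial ℂ)) (d : ℤ)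
    (hM : ∀ i j, ∀ k ∈ (M i j).coeff.support, -d ≤ k)
    (hcircle : ∀ z : ℂ, ‖z‖ = 1 → ‖MatEval z M‖ ≤ 1) {ω : ℂ} (hω0 : ω ≠ 0) (hω1 : ‖ω‖ ≤ 1) :
    ‖MatEval ω M‖ ≤ ‖ω‖ ^ (-d) := by
  obtain ⟨F, hF, hFM⟩ := exists_differentiable_eq_zpow_smul_MatEval M d hM
  have hsphere : ∀ z ∈ frontier (Metric.ball (0 : ℂ) 1), ‖F z‖ ≤ 1 := by
    intro z hz
    rw [frontier_ball 0 one_ne_zero, mem_sphere_zero_iff_norm] at hz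
    rw [hFM z (norm_ne_zero_iff.mp (by rw [hz]; exact one_ne_zero)), norm_smul, norm_zpow, hz,
      one_zpow, one_mul]
    exact hcircle z hz
  have hω : ‖F ω‖ ≤ 1 :=
    Complex.norm_le_of_forall_mem_frontier_norm_le Metric.isBounded_ball hF.diffContOnCl hsphere
      (by rwa [closure_ball 0 one_ne_zero, mem_closedBall_zero_iff])
  rw [hFM ω hω0, norm_smul, norm_zpow] at hω
  rw [zpow_neg, ← one_div, le_div_iff₀ (zpow_pos (norm_pos_iff.mpr hω0) d), mul_comm]
  exact hω

lemma le_matDeg {n : ℕ} {M : Matrix (Fin n) (Fin n) (LaurentPolynomial ℂ)} {i j : Fin n} {k : ℤ}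
    (hk : k ∈ (M i j).coeff.support) : k ≤ matDeg M := by
  have hmem : k ∈ matSupport M := Finset.mem_biUnion.mpr ⟨(i, j), Finset.mem_univ _, hk⟩
  obtain ⟨b, hb⟩ := Finset.max_of_mem hmem
  rw [matDeg, hb]
  exact WithBot.coe_le_coe.mp (hb ▸ Finset.le_max hmem)

lemma neg_matDeg_le_of_mem_support_paraConjTranspose {n : ℕ}
    (U : Matrix (Fin n) (Fin n) (LaurentPolynomial ℂ)) (i j : Fin n) {k : ℤ}
    (hk : k ∈ (paraConjTranspose U i j).coeff.support) : -matDeg U ≤ k := by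
  have : -k ∈ (U j i).coeff.support := by
    simpa [paraConjTranspose, coeff_paraConj] using hk
  linarith [le_matDeg this]

theorem paraunitary_eval_inv_norm_bound_general {n : ℕ}
    (U : Matrix (Fin n) (Fin n) (LaurentPolynomial ℂ)) (hU : IsParaunitary U)
    (Δ : ℝ) (h0 : 0 < Δ) (h1 : Δ < 1) :
    IsUnit (MatEval (Δ : ℂ) U) ∧
      (MatEval (Δ : ℂ) U)⁻¹ = MatEval (Δ : ℂ) (paraConjTranspose U) ∧
      specNorm (MatEval (Δ : ℂ) U)⁻¹ ≤ Δ ^ (-(matDeg U)) := by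
  have hΔ : (Δ : ℂ) ≠ 0 := Complex.ofReal_ne_zero.mpr h0.ne'
  have hleft := hU.MatEval_mul_eq_one hΔ
  have hinv := Matrix.inv_eq_left_inv hleft
  refine ⟨(Matrix.isUnit_iff_isUnit_det _).mpr (Matrix.isUnit_det_of_left_inverse hleft), hinv, ?_⟩
  have hnorm : ‖(Δ : ℂ)‖ = Δ := by simp [h0.le]
  calc specNorm (MatEval (Δ : ℂ) U)⁻¹ = ‖MatEval (Δ : ℂ) (paraConjTranspose U)‖ := by
        rw [hinv]; rfl
    _ ≤ ‖(Δ : ℂ)‖ ^ (-matDeg U) :=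
      norm_MatEval_le_of_norm_le_one_on_circle _ _
        (neg_matDeg_le_of_mem_support_paraConjTranspose U)
        (fun _ hz => hU.norm_MatEval_paraConjTranspose_le_one hz) hΔ (hnorm.trans_le h1.le)
    _ = Δ ^ (-matDeg U) := by rw [hnorm]

/-- inverse of an evaluated paraunitary matrix and its norm bound. -/
theorem paraunitary_eval_inv_norm_bound {n : ℕ}
    (U : Matrix (Fin n) (Fin n) (LaurentPolynomial ℂ)) (hU : IsParaunitary U) (hU0 : U ≠ 0)
    (Δ : ℝ) (h0 : 0 < Δ) (h1 : Δ < 1) :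
    IsUnit (MatEval (Δ : ℂ) U) ∧
      (MatEval (Δ : ℂ) U)⁻¹ = MatEval (Δ : ℂ) (paraConjTranspose U) ∧
      specNorm (MatEval (Δ : ℂ) U)⁻¹ ≤ Δ ^ (-(matDeg U)) :=
  paraunitary_eval_inv_norm_bound_general U hU Δ h0 h1
end

section
/- Coordinate-level quasi-entropy change bound: there is a universal constant C > 0 such that for every real 2×2 rotation matrix R and all vectors α, β ∈ ℂ², setting α' = Rα and β' = Rβ, one has |h(α₁·conj(β₁)) + h(α₂·conj(β₂)) − h(α'₁·conj(β'₁)) − h(α'₂·conj(β'₂))| ≤ C · ‖α‖ · ‖β‖, where ‖·‖ is the Euclidean norm on ℂ² and |·| is the complex modulus. -/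
open scoped ComplexConjugate
open LaurentPolynomial Finset

/-! The map `h` is homogeneous up to a linear correction, `h (s * u) = s * h u - s * u * log₂ s`
for real `s`, and a rotation preserves the sesquilinear pairing `∑ αᵢ conj βᵢ`, so the correction
cancels in the difference. Scaling by `s = ‖α‖ ‖β‖` therefore reduces the bound to four arguments
of modulus at most `1`, on which `|h| ≤ 1 / log 2 < 2`. -/

open Matrix

@[simp]
lemma hQE_zero : hQE 0 = 0 := by simp [hQE]

lemma hQE_ofReal_mul (s : ℝ) (u : ℂ) :
    hQE (s * u) = s * hQE u - s * u * Real.logb 2 s := by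
  rcases eq_or_ne s 0 with rfl | hs
  · simp
  rcases eq_or_ne u 0 with rfl | hu
  · simp
  rw [hQE, hQE, norm_mul, Complex.norm_real, Real.norm_eq_abs,
    Real.logb_mul (abs_ne_zero.2 hs) (norm_ne_zero_iff.2 hu), Real.logb_abs]
  push_cast
  ring

lemma norm_hQE_le_two {u : ℂ} (hu : ‖u‖ ≤ 1) : ‖hQE u‖ ≤ 2 := by
  rcases eq_or_ne u 0 with rfl | hu0
  · simp
  have hlog2 : 1 / 2 < Real.log 2 := by linarith [Real.log_two_gt_d9]
  have hxlogx := Real.abs_log_mul_self_lt ‖u‖ (norm_pos_iff.2 hu0) hu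
  have hnorm : ‖hQE u‖ = |Real.log ‖u‖ * ‖u‖| / Real.log 2 := by
    rw [hQE, norm_mul, norm_neg, Complex.norm_real, Real.norm_eq_abs, Real.logb,
      abs_div, abs_of_pos (Real.log_pos one_lt_two), abs_mul, abs_norm]
    ring
  rw [hnorm, div_le_iff₀ (by linarith)]
  linarith

lemma sum_hQE_ofReal_mul_sub_sum_of_sum_eq {ι : Type*} [Fintype ι] (s : ℝ) {u v : ι → ℂ}
    (h : ∑ i, u i = ∑ i, v i) :
    ∑ i, hQE (s * u i) - ∑ i, hQE (s * v i) = s * (∑ i, hQE (u i) - ∑ i, hQE (v i)) := by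
  simp only [hQE_ofReal_mul, Finset.sum_sub_distrib, ← Finset.mul_sum, ← Finset.sum_mul, h]
  ring

lemma norm_sum_hQE_sub_sum_hQE_le {ι : Type*} [Fintype ι] {u v : ι → ℂ} {s : ℝ}
    (hs : 0 ≤ s) (h : ∑ i, u i = ∑ i, v i) (hu : ∀ i, ‖u i‖ ≤ s) (hv : ∀ i, ‖v i‖ ≤ s) :
    ‖∑ i, hQE (u i) - ∑ i, hQE (v i)‖ ≤ 4 * Fintype.card ι * s := by
  rcases hs.eq_or_lt with rfl | hs
  · have hu0 : ∀ i, u i = 0 := fun i => norm_le_zero_iff.1 (hu i)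
    have hv0 : ∀ i, v i = 0 := fun i => norm_le_zero_iff.1 (hv i)
    simp [hu0, hv0]
  have hs' : (s : ℂ) ≠ 0 := Complex.ofReal_ne_zero.2 hs.ne'
  have hunit : ∀ {w : ℂ}, ‖w‖ ≤ s → ‖hQE (w / s)‖ ≤ 2 := fun hw => norm_hQE_le_two <| by
    rwa [norm_div, Complex.norm_real, Real.norm_of_nonneg hs.le, div_le_one hs]
  have hscale := sum_hQE_ofReal_mul_sub_sum_of_sum_eq s (u := fun i => u i / s)
    (v := fun i => v i / s) (by simp only [← Finset.sum_div, h])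
  simp only [mul_div_cancel₀ _ hs'] at hscale
  rw [hscale, norm_mul, Complex.norm_real, Real.norm_of_nonneg hs.le]
  calc s * ‖∑ i, hQE (u i / s) - ∑ i, hQE (v i / s)‖
      ≤ s * (∑ i, ‖hQE (u i / s)‖ + ∑ i, ‖hQE (v i / s)‖) := by
        gcongr
        exact (norm_sub_le _ _).trans (add_le_add (norm_sum_le _ _) (norm_sum_le _ _))
    _ ≤ s * (∑ _i : ι, 2 + ∑ _i : ι, 2) := by
        gcongr with i _ i _
        exacts [hunit (hu i), hunit (hv i)]
    _ = 4 * Fintype.card ι * s := by simp; ring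

namespace Matrix

lemma mulVec_dotProduct_star_mulVec_of_mem_unitaryGroup {n R : Type*} [Fintype n]
    [DecidableEq n] [CommRing R] [StarRing R] {U : Matrix n n R}
    (hU : U ∈ unitaryGroup n R) (x y : n → R) :
    (U *ᵥ x) ⬝ᵥ star (U *ᵥ y) = x ⬝ᵥ star y := by
  rw [star_mulVec, dotProduct_comm, ← dotProduct_mulVec, mulVec_mulVec, ← star_eq_conjTranspose,
    mem_unitaryGroup_iff'.1 hU, one_mulVec, dotProduct_comm]

lemma norm_toLp_mulVec_of_mem_unitaryGroup {n 𝕜 : Type*} [Fintype n] [DecidableEq n]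
    [RCLike 𝕜] {U : Matrix n n 𝕜} (hU : U ∈ unitaryGroup n 𝕜) (x : n → 𝕜) :
    ‖WithLp.toLp 2 (U *ᵥ x)‖ = ‖WithLp.toLp 2 x‖ := by
  have h := congrArg RCLike.re (mulVec_dotProduct_star_mulVec_of_mem_unitaryGroup hU x x)
  rw [← EuclideanSpace.inner_toLp_toLp, ← EuclideanSpace.inner_toLp_toLp,
    inner_self_eq_norm_sq, inner_self_eq_norm_sq] at h
  exact (pow_left_inj₀ (norm_nonneg _) (norm_nonneg _) two_ne_zero).1 h

lemma rotation_mem_unitaryGroup {𝕜 : Type*} [RCLike 𝕜] (θ : ℝ) :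
    !![(Real.cos θ : 𝕜), (Real.sin θ : 𝕜); (-(Real.sin θ) : 𝕜), (Real.cos θ : 𝕜)]
      ∈ unitaryGroup (Fin 2) 𝕜 := by
  have h : (Real.cos θ : 𝕜) ^ 2 + (Real.sin θ : 𝕜) ^ 2 = 1 := by
    exact_mod_cast congrArg ((↑) : ℝ → 𝕜) (Real.cos_sq_add_sin_sq θ)
  rw [mem_unitaryGroup_iff']
  ext i j
  fin_cases i <;> fin_cases j <;> simp [mul_apply, Fin.sum_univ_two] <;> ring_nf <;>
    linear_combination h

end Matrix

lemma norm_mul_conj_le_norm_toLp_mul_norm_toLp {n 𝕜 : Type*} [Fintype n] [RCLike 𝕜]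
    (x y : n → 𝕜) (i : n) :
    ‖x i * conj (y i)‖ ≤ ‖WithLp.toLp 2 x‖ * ‖WithLp.toLp 2 y‖ := by
  rw [norm_mul, RCLike.norm_conj]
  exact mul_le_mul (PiLp.norm_apply_le (WithLp.toLp 2 x) i)
    (PiLp.norm_apply_le (WithLp.toLp 2 y) i) (norm_nonneg _) (norm_nonneg _)

/-- coordinate-level quasi-entropy change bound under a 2×2 rotation. -/
theorem hQE_rotation_change_bound :
    ∃ C : ℝ, 0 < C ∧
      ∀ (θ : ℝ) (α β α' β' : Fin 2 → ℂ),
        α' = (Matrix.of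
            !![(Real.cos θ : ℂ), (Real.sin θ : ℂ); (-(Real.sin θ) : ℂ), (Real.cos θ : ℂ)]).mulVec
            α →
        β' = (Matrix.of
            !![(Real.cos θ : ℂ), (Real.sin θ : ℂ); (-(Real.sin θ) : ℂ), (Real.cos θ : ℂ)]).mulVec
            β →
        ‖hQE (α 0 * conj (β 0)) + hQE (α 1 * conj (β 1))
            - hQE (α' 0 * conj (β' 0)) - hQE (α' 1 * conj (β' 1))‖
          ≤ C * Real.sqrt (‖α 0‖ ^ 2 + ‖α 1‖ ^ 2)
              * Real.sqrt (‖β 0‖ ^ 2 + ‖β 1‖ ^ 2) := by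
  refine ⟨8, by norm_num, fun θ α β α' β' hα hβ => ?_⟩
  have hR := rotation_mem_unitaryGroup (𝕜 := ℂ) θ
  have hpairing : ∑ i, α i * conj (β i) = ∑ i, α' i * conj (β' i) := by
    rw [hα, hβ]
    exact (mulVec_dotProduct_star_mulVec_of_mem_unitaryGroup hR α β).symm
  have hα' : ‖WithLp.toLp 2 α'‖ = ‖WithLp.toLp 2 α‖ :=
    hα ▸ norm_toLp_mulVec_of_mem_unitaryGroup hR α
  have hβ' : ‖WithLp.toLp 2 β'‖ = ‖WithLp.toLp 2 β‖ :=
    hβ ▸ norm_toLp_mulVec_of_mem_unitaryGroup hR β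
  have key := norm_sum_hQE_sub_sum_hQE_le (by positivity) hpairing
    (norm_mul_conj_le_norm_toLp_mul_norm_toLp α β)
    (hα' ▸ hβ' ▸ norm_mul_conj_le_norm_toLp_mul_norm_toLp α' β')
  simp only [EuclideanSpace.norm_eq, Fin.sum_univ_two, Fintype.card_fin, Nat.cast_ofNat] at key
  rw [sub_sub]
  linarith
end

section
/- Exact row norms of the preconditioned matrices: let M be an n×n paraunitary matrix of Laurent polynomials over ℂ, let Δ ∈ (0,1) be real, let ρ, ℓ ∈ ℕ, and let A = (Σ_{k=0}^{ρ+ℓ} Δ^k z^{−k}) · Id. Furthermore let V be any n×n paraunitary matrix, X any n×n complex unitary constant matrix, and B = V · (Σ_{i=ρ}^{ρ+ℓ} z^{−i}) · X. Then every row of M·A has norm sqrt(Σ_{k=0}^{ρ+ℓ} Δ^{2k}) (which is at most sqrt(1/(1 − Δ²))), and every row of M·B has norm sqrt(ℓ + 1). -/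
open scoped ComplexConjugate
open LaurentPolynomial Finset

/-! The row norms of `N` are the square roots of the constant coefficients of the diagonal of
`N * N*`. For both preconditioned matrices, `M * (p • 1)` and `M * (V * (p • X))`, the paraunitary
and unitary factors cancel in `N * N*`, leaving `(p * p*) • 1`; so every row of `N` has the norm of
the scalar `p`, the `ℓ²` norm of its coefficients. The bound is the geometric series. -/

namespace LaurentPolynomial

@[simp]
lemma coeff_paraConj (p : ℂ[T;T⁻¹]) (k : ℤ) : (paraConj p).coeff k = conj (p.coeff (-k)) := rfl

noncomputable def paraConjRingHom : ℂ[T;T⁻¹] →+* ℂ[T;T⁻¹] :=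
  (invert : ℂ[T;T⁻¹] ≃ₐ[ℂ] ℂ[T;T⁻¹]).toRingHom.comp
    (AddMonoidAlgebra.mapRingHom ℤ (starRingEnd ℂ))

@[simp]
lemma paraConjRingHom_apply (p : ℂ[T;T⁻¹]) : paraConjRingHom p = paraConj p := by
  ext k
  simp [paraConjRingHom]

lemma paraConj_C (a : ℂ) : paraConj (C a) = C (conj a) := by
  ext k
  simp only [coeff_paraConj, C_apply, neg_eq_zero]
  split_ifs <;> simp

lemma pnorm_nonneg (p : ℂ[T;T⁻¹]) : 0 ≤ pnorm p := Real.sqrt_nonneg _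

lemma pnorm_sq (p : ℂ[T;T⁻¹]) : pnorm p ^ 2 = ∑ k ∈ p.coeff.support, ‖p.coeff k‖ ^ 2 :=
  Real.sq_sqrt (by positivity)

lemma pnorm_sq_eq_sum_of_support_subset {p : ℂ[T;T⁻¹]} {s : Finset ℤ}
    (hs : p.coeff.support ⊆ s) : pnorm p ^ 2 = ∑ k ∈ s, ‖p.coeff k‖ ^ 2 := by
  rw [pnorm_sq]
  exact Finset.sum_subset hs fun k _ hk => by simp [Finsupp.notMem_support_iff.mp hk]

lemma coeff_zero_mul_paraConj_self (p : ℂ[T;T⁻¹]) :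
    (p * paraConj p).coeff 0 = (pnorm p ^ 2 : ℝ) := by
  rw [pnorm_sq, AddMonoidAlgebra.coeff_mul_apply_left, Finsupp.sum]
  push_cast
  exact Finset.sum_congr rfl fun k _ => by simp [Complex.mul_conj']

lemma pnorm_sum_C_mul_T {ι : Type*} (s : Finset ι) (c : ι → ℂ) {e : ι → ℤ} (he : Set.InjOn e s) :
    pnorm (∑ i ∈ s, C (c i) * T (e i)) = √(∑ i ∈ s, ‖c i‖ ^ 2) := by
  classical
  set p := ∑ i ∈ s, C (c i) * T (e i)
  have hcoeff (k : ℤ) : p.coeff k = ∑ i ∈ s, if e i = k then c i else 0 := by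
    simp [p, AddMonoidAlgebra.coeff_sum, ← single_eq_C_mul_T, Finsupp.single_apply]
  have hsupp : p.coeff.support ⊆ s.image e := by
    intro k hk
    by_contra hke
    refine Finsupp.mem_support_iff.mp hk ?_
    rw [hcoeff]
    exact Finset.sum_eq_zero fun i hi => if_neg fun h => hke (Finset.mem_image.mpr ⟨i, hi, h⟩)
  have hcoeff_e {j : ι} (hj : j ∈ s) : p.coeff (e j) = c j := by
    rw [hcoeff, Finset.sum_eq_single_of_mem j hj fun i hi hij => if_neg fun h => hij (he hi hj h),
      if_pos rfl]
  rw [← Real.sqrt_sq (pnorm_nonneg p), pnorm_sq_eq_sum_of_support_subset hsupp,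
    Finset.sum_image he]
  exact congrArg _ (Finset.sum_congr rfl fun j hj => by rw [hcoeff_e hj])

end LaurentPolynomial

section Paraunitary

open scoped Matrix

variable {n : ℕ}

lemma paraConjTranspose_eq_transpose_map (U : Matrix (Fin n) (Fin n) ℂ[T;T⁻¹]) :
    paraConjTranspose U = (U.map paraConjRingHom)ᵀ := by
  ext i j
  simp [paraConjTranspose]

lemma paraConjTranspose_mul (U W : Matrix (Fin n) (Fin n) ℂ[T;T⁻¹]) :
    paraConjTranspose (U * W) = paraConjTranspose W * paraConjTranspose U := by
  simp only [paraConjTranspose_eq_transpose_map, Matrix.map_mul, Matrix.transpose_mul]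

lemma paraConjTranspose_smul (p : ℂ[T;T⁻¹]) (U : Matrix (Fin n) (Fin n) ℂ[T;T⁻¹]) :
    paraConjTranspose (p • U) = paraConj p • paraConjTranspose U := by
  ext i j
  simp [paraConjTranspose, ← paraConjRingHom_apply]

lemma paraConjTranspose_map_C (X : Matrix (Fin n) (Fin n) ℂ) :
    paraConjTranspose (X.map C) = Xᴴ.map C := by
  ext i j
  simp [paraConjTranspose, paraConj_C]

lemma IsParaunitary.mul_paraConjTranspose_self {U : Matrix (Fin n) (Fin n) ℂ[T;T⁻¹]}
    (hU : IsParaunitary U) : U * paraConjTranspose U = 1 :=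
  mul_eq_one_comm.mp hU

lemma IsParaunitary.mul_left_mul_paraConjTranspose {U W : Matrix (Fin n) (Fin n) ℂ[T;T⁻¹]}
    {r : ℂ[T;T⁻¹]} (hU : IsParaunitary U) (hW : W * paraConjTranspose W = r • 1) :
    U * W * paraConjTranspose (U * W) = r • 1 := by
  rw [paraConjTranspose_mul, Matrix.mul_assoc, ← Matrix.mul_assoc W, hW, Matrix.smul_mul,
    Matrix.one_mul, Matrix.mul_smul, hU.mul_paraConjTranspose_self]

lemma smul_map_C_mul_paraConjTranspose (p : ℂ[T;T⁻¹]) {X : Matrix (Fin n) (Fin n) ℂ}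
    (hX : Xᴴ * X = 1) :
    p • X.map C * paraConjTranspose (p • X.map C) = (p * paraConj p) • 1 := by
  rw [paraConjTranspose_smul, paraConjTranspose_map_C, Matrix.smul_mul, Matrix.mul_smul, smul_smul,
    ← Matrix.map_mul, mul_eq_one_comm.mp hX, Matrix.map_one _ (map_zero _) (map_one _)]

lemma smul_one_mul_paraConjTranspose (p : ℂ[T;T⁻¹]) :
    p • (1 : Matrix (Fin n) (Fin n) ℂ[T;T⁻¹]) * paraConjTranspose (p • 1)
      = (p * paraConj p) • 1 := by
  simpa [Matrix.map_one _ (map_zero _) (map_one _)] using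
    smul_map_C_mul_paraConjTranspose p (X := (1 : Matrix (Fin n) (Fin n) ℂ)) (by simp)

lemma rowNorm_eq_pnorm {N : Matrix (Fin n) (Fin n) ℂ[T;T⁻¹]} {p : ℂ[T;T⁻¹]}
    (hN : N * paraConjTranspose N = (p * paraConj p) • 1) (i : Fin n) :
    rowNorm N i = pnorm p := by
  have hdiag : ∑ j, N i j * paraConj (N i j) = p * paraConj p := by
    simpa [Matrix.mul_apply, paraConjTranspose] using congrFun (congrFun hN i) i
  have hsq : ∑ j, pnorm (N i j) ^ 2 = pnorm p ^ 2 := by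
    apply Complex.ofReal_injective
    rw [← coeff_zero_mul_paraConj_self, ← hdiag]
    simp [AddMonoidAlgebra.coeff_sum, coeff_zero_mul_paraConj_self]
  rw [rowNorm, hsq, Real.sqrt_sq (pnorm_nonneg p)]

end Paraunitary

/-- exact row norms of the preconditioned matrices. -/
theorem rowNorms_of_preconditioned {n : ℕ}
    (M V : Matrix (Fin n) (Fin n) (LaurentPolynomial ℂ))
    (hM : IsParaunitary M) (hV : IsParaunitary V)
    (X : Matrix (Fin n) (Fin n) ℂ) (hX : X.conjTranspose * X = 1)
    (Δ : ℝ) (h0 : 0 < Δ) (h1 : Δ < 1) (ρ ℓ : ℕ) :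
    (∀ i : Fin n,
        rowNorm (M * (((∑ k ∈ Finset.range (ρ + ℓ + 1),
            LaurentPolynomial.C ((Δ : ℂ) ^ k) * LaurentPolynomial.T (-(k : ℤ))) :
              LaurentPolynomial ℂ)
          • (1 : Matrix (Fin n) (Fin n) (LaurentPolynomial ℂ)))) i
          = Real.sqrt (∑ k ∈ Finset.range (ρ + ℓ + 1), Δ ^ (2 * k))) ∧
    Real.sqrt (∑ k ∈ Finset.range (ρ + ℓ + 1), Δ ^ (2 * k))
      ≤ Real.sqrt (1 / (1 - Δ ^ 2)) ∧
    (∀ i : Fin n,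
        rowNorm (M * (V * (((∑ j ∈ Finset.Icc ρ (ρ + ℓ),
            LaurentPolynomial.T (-(j : ℤ))) : LaurentPolynomial ℂ)
          • X.map LaurentPolynomial.C))) i
          = Real.sqrt ((ℓ : ℝ) + 1)) := by
  have hneg : ∀ s : Finset ℕ, Set.InjOn (fun k : ℕ => -(k : ℤ)) s := fun s a _ b _ h => by
    simpa using h
  refine ⟨fun i => ?_, ?_, fun i => ?_⟩
  · rw [rowNorm_eq_pnorm (hM.mul_left_mul_paraConjTranspose (smul_one_mul_paraConjTranspose _)),
      pnorm_sum_C_mul_T _ _ (hneg _)]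
    simp [pow_mul, ← pow_right_comm _ 2]
  · have hgeom := geom_sum_Ico_le_of_lt_one (x := Δ ^ 2) (m := 0) (n := ρ + ℓ + 1) (sq_nonneg Δ)
        (pow_lt_one₀ h0.le h1 two_ne_zero)
    rw [← Finset.range_eq_Ico, pow_zero] at hgeom
    exact Real.sqrt_le_sqrt (by simpa only [pow_mul] using hgeom)
  · have hB := hV.mul_left_mul_paraConjTranspose (smul_map_C_mul_paraConjTranspose
      (∑ j ∈ Icc ρ (ρ + ℓ), T (-(j : ℤ))) hX)
    have hq : ∑ j ∈ Icc ρ (ρ + ℓ), T (-(j : ℤ))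
        = ∑ j ∈ Icc ρ (ρ + ℓ), C (1 : ℂ) * T (-(j : ℤ)) := by
      simp
    rw [rowNorm_eq_pnorm (hM.mul_left_mul_paraConjTranspose hB), hq, pnorm_sum_C_mul_T _ _ (hneg _)]
    simp [add_assoc]
end
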